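/- arXiv:1212.4667 — 3 statements merged into one kernel-verified Lean document; each statement's English description precedes it below -/
import Mathlib

section
/- For every real c > 0 and every ε with 0 < ε < c/2 there exists n₀ such that for every integer n ≥ n₀ the following holds: if G is an oriented graph on n vertices in which every vertex v satisfies (c - ε)n < d⁺(v) < (c + ε)n and (c - ε)n < d⁻(v) < (c + ε)n, then there exists a subset V₀ of V(G) of size ⌈n^{2/3}⌉ such that for every vertex v of G, both |N⁺(v) ∩ V₀| and |N⁻(v) ∩ V₀| lie strictly between (c - 2ε)|V₀| and (c + 2ε)|V₀|. -/
/-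
Choose `m = ⌈n^{2/3}⌉` vertices uniformly and independently with replacement, i.e. average over
all `n^m` maps `f : Fin m → Fin n`. For a vertex set `N` of density `δ`, the centred count
`#{i | f i ∈ N} - m δ` has fourth moment at most `3 m²` (peel off one coordinate at a time), so
by Markov it exceeds `ε m / 4` with probability at most `768 / (ε⁴ m²)`. The number
`m - #(image f)` of repeated samples has mean at most `m² / n`, so it exceeds `ε m / 4` with
probability at most `4 m / (ε n)`. Over the `2 n` neighbourhoods these failure probabilities add
up to `O(n^{-1/3}) < 1`, so some sample is good for all of them, and any `m`-set containing its
image has every neighbourhood count within `ε m / 2` of `m d / n`, where `d` is the degree.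
-/

/-- Outdegree of `v` in the digraph given by the relation `R`. -/
noncomputable def outDeg {n : ℕ} (R : Fin n → Fin n → Prop) (v : Fin n) : ℕ :=
  Set.ncard {u | R v u}

/-- Indegree of `v` in the digraph given by the relation `R`. -/
noncomputable def inDeg {n : ℕ} (R : Fin n → Fin n → Prop) (v : Fin n) : ℕ :=
  Set.ncard {u | R u v}

open Finset

section Moments

variable {α : Type*} [Fintype α]

lemma sum_fun_fin_succ {M : Type*} [AddCommMonoid M] {m : ℕ} (F : (Fin (m + 1) → α) → M) :
    ∑ f, F f = ∑ a, ∑ f : Fin m → α, F (Fin.cons a f) := by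
  rw [← (Fin.consEquiv fun _ => α).sum_comp, Fintype.sum_prod_type]
  rfl

variable {g : α → ℝ}

lemma sum_sum_comp_eq_zero (hsum : ∑ a, g a = 0) (m : ℕ) :
    ∑ f : Fin m → α, ∑ i, g (f i) = 0 := by
  induction m with
  | zero => simp
  | succ m ih =>
    simp [sum_fun_fin_succ, Fin.sum_univ_succ, sum_add_distrib, ih, ← mul_sum, hsum]

lemma sum_pow_le_card (hle : ∀ a, |g a| ≤ 1) (k : ℕ) : ∑ a, g a ^ k ≤ Fintype.card α := by
  calc ∑ a, g a ^ k ≤ ∑ _a : α, (1 : ℝ) := sum_le_sum fun a _ =>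
        (le_abs_self _).trans (abs_pow (g a) k ▸ pow_le_one₀ (abs_nonneg _) (hle a))
    _ = Fintype.card α := by simp

lemma sum_add_sq_le (hsum : ∑ a, g a = 0) (hle : ∀ a, |g a| ≤ 1) (s : ℝ) :
    ∑ a, (g a + s) ^ 2 ≤ Fintype.card α * (1 + s ^ 2) := by
  have hexp : ∀ a, (g a + s) ^ 2 = g a ^ 2 + 2 * s * g a + s ^ 2 := fun a => by ring
  simp only [hexp, sum_add_distrib, ← mul_sum, hsum, sum_const, card_univ, nsmul_eq_mul]
  linarith [sum_pow_le_card hle 2]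

lemma sum_add_pow_four_le (hsum : ∑ a, g a = 0) (hle : ∀ a, |g a| ≤ 1) (s : ℝ) :
    ∑ a, (g a + s) ^ 4 ≤ Fintype.card α * (1 + 6 * s ^ 2 + s ^ 4) + 4 * s * ∑ a, g a ^ 3 := by
  have hexp : ∀ a, (g a + s) ^ 4 =
      g a ^ 4 + 4 * s * g a ^ 3 + 6 * s ^ 2 * g a ^ 2 + 4 * s ^ 3 * g a + s ^ 4 :=
    fun a => by ring
  simp only [hexp, sum_add_distrib, ← mul_sum, hsum, sum_const, card_univ, nsmul_eq_mul]
  nlinarith [sum_pow_le_card hle 4, sum_pow_le_card hle 2, sq_nonneg s]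

lemma sum_sum_comp_sq_le (hsum : ∑ a, g a = 0) (hle : ∀ a, |g a| ≤ 1) (m : ℕ) :
    ∑ f : Fin m → α, (∑ i, g (f i)) ^ 2 ≤ m * Fintype.card α ^ m := by
  induction m with
  | zero => simp
  | succ m ih =>
    calc ∑ f : Fin (m + 1) → α, (∑ i, g (f i)) ^ 2
        = ∑ f : Fin m → α, ∑ a, (g a + ∑ i, g (f i)) ^ 2 := by
          rw [sum_fun_fin_succ, sum_comm]; simp [Fin.sum_univ_succ]
      _ ≤ ∑ f : Fin m → α, Fintype.card α * (1 + (∑ i, g (f i)) ^ 2) :=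
          sum_le_sum fun f _ => sum_add_sq_le hsum hle _
      _ ≤ (m + 1 : ℕ) * Fintype.card α ^ (m + 1) := by
          simp only [← mul_sum, sum_add_distrib, sum_const, card_univ, Fintype.card_fun,
            Fintype.card_fin, nsmul_eq_mul]
          push_cast
          rw [pow_succ]
          nlinarith [mul_le_mul_of_nonneg_left ih (Nat.cast_nonneg (α := ℝ) (Fintype.card α))]

lemma sum_sum_comp_pow_four_le (hsum : ∑ a, g a = 0) (hle : ∀ a, |g a| ≤ 1) (m : ℕ) :
    ∑ f : Fin m → α, (∑ i, g (f i)) ^ 4 ≤ 3 * m ^ 2 * Fintype.card α ^ m := by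
  induction m with
  | zero => simp
  | succ m ih =>
    calc ∑ f : Fin (m + 1) → α, (∑ i, g (f i)) ^ 4
        = ∑ f : Fin m → α, ∑ a, (g a + ∑ i, g (f i)) ^ 4 := by
          rw [sum_fun_fin_succ, sum_comm]; simp [Fin.sum_univ_succ]
      _ ≤ ∑ f : Fin m → α, (Fintype.card α * (1 + 6 * (∑ i, g (f i)) ^ 2 + (∑ i, g (f i)) ^ 4)
            + 4 * (∑ i, g (f i)) * ∑ a, g a ^ 3) :=
          sum_le_sum fun f _ => sum_add_pow_four_le hsum hle _
      _ ≤ 3 * (m + 1 : ℕ) ^ 2 * Fintype.card α ^ (m + 1) := by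
          simp only [← mul_sum, ← sum_mul, sum_add_distrib, sum_const, card_univ, Fintype.card_fun,
            Fintype.card_fin, nsmul_eq_mul, sum_sum_comp_eq_zero hsum]
          push_cast
          rw [pow_succ (Fintype.card α : ℝ)]
          have hN := Nat.cast_nonneg (α := ℝ) (Fintype.card α)
          have hNm : (0 : ℝ) ≤ Fintype.card α ^ m := by positivity
          nlinarith [mul_le_mul_of_nonneg_left ih hN,
            mul_le_mul_of_nonneg_left (sum_sum_comp_sq_le hsum hle m) hN, mul_nonneg hNm hN,
            mul_nonneg (mul_nonneg hNm hN) (Nat.cast_nonneg (α := ℝ) m)]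

end Moments

section Defect

variable {α : Type*} [DecidableEq α]

lemma card_image_univ_le {m : ℕ} (f : Fin m → α) : #(univ.image f) ≤ m :=
  card_image_le.trans_eq (card_fin m)

lemma abs_card_filter_sub_card_filter_comp_le {m : ℕ} (f : Fin m → α) {V : Finset α}
    (hfV : univ.image f ⊆ V) (hV : #V = m) (p : α → Prop) [DecidablePred p] :
    |(#{a ∈ V | p a} : ℝ) - #{i | p (f i)}| ≤ m - #(univ.image f) := by
  have hpos : #{a ∈ univ.image f | p a} ≤ #{i | p (f i)} := by
    rw [filter_image]; exact card_image_le
  have hneg : #{a ∈ univ.image f | ¬p a} ≤ #{i | ¬p (f i)} := by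
    rw [filter_image]; exact card_image_le
  have hV_pos : #{a ∈ univ.image f | p a} ≤ #{a ∈ V | p a} :=
    card_le_card (filter_subset_filter _ hfV)
  have hV_neg : #{a ∈ univ.image f | ¬p a} ≤ #{a ∈ V | ¬p a} :=
    card_le_card (filter_subset_filter _ hfV)
  have hI := card_filter_add_card_filter_not (s := univ.image f) (fun a => p a)
  have hVsplit := card_filter_add_card_filter_not (s := V) (fun a => p a)
  have hsplit := card_filter_add_card_filter_not (s := (univ : Finset (Fin m))) (fun i => p (f i))
  rw [card_univ, Fintype.card_fin] at hsplit
  have hm := card_image_univ_le f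
  rw [abs_sub_le_iff, ← Nat.cast_sub hm, sub_le_iff_le_add, sub_le_iff_le_add]
  constructor <;> norm_cast <;> omega

lemma image_univ_fin_cons {m : ℕ} (a : α) (f : Fin m → α) :
    univ.image (Fin.cons a f : Fin (m + 1) → α) = insert a (univ.image f) := by
  ext b; simp [Fin.exists_fin_succ, eq_comm]

lemma succ_sub_card_image_fin_cons_le {m : ℕ} (a : α) (f : Fin m → α) :
    m + 1 - #(univ.image (Fin.cons a f : Fin (m + 1) → α)) ≤
      m - #(univ.image f) + if a ∈ univ.image f then 1 else 0 := by
  have := card_image_univ_le f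
  rw [image_univ_fin_cons]
  split_ifs with ha
  · rw [insert_eq_of_mem ha]; omega
  · rw [card_insert_of_notMem ha]; omega

variable [Fintype α]

theorem card_mul_sum_sub_card_image_le (m : ℕ) :
    Fintype.card α * ∑ f : Fin m → α, (m - #(univ.image f)) ≤ m ^ 2 * Fintype.card α ^ m := by
  induction m with
  | zero => simp
  | succ m ih =>
    set N := Fintype.card α
    have hcons : ∀ f : Fin m → α, ∑ a, (m + 1 - #(univ.image (Fin.cons a f : Fin (m + 1) → α))) ≤
        N * (m - #(univ.image f)) + m := fun f =>
      calc _ ≤ ∑ a, (m - #(univ.image f) + if a ∈ univ.image f then 1 else 0) :=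
            sum_le_sum fun a _ => succ_sub_card_image_fin_cons_le a f
        _ = N * (m - #(univ.image f)) + #(univ.image f) := by
            simp [sum_add_distrib, N]
        _ ≤ _ := by gcongr; exact card_image_univ_le f
    calc N * ∑ f : Fin (m + 1) → α, (m + 1 - #(univ.image f))
        ≤ N * ∑ f : Fin m → α, (N * (m - #(univ.image f)) + m) := by
          rw [sum_fun_fin_succ, sum_comm]; gcongr with f; exact hcons f
      _ = N * (N * ∑ f : Fin m → α, (m - #(univ.image f))) + m * N ^ (m + 1) := by
          simp only [sum_add_distrib, ← mul_sum, sum_const, card_univ, Fintype.card_fun,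
            Fintype.card_fin, smul_eq_mul]
          ring
      _ ≤ N * (m ^ 2 * N ^ m) + m * N ^ (m + 1) := by gcongr
      _ ≤ (m + 1) ^ 2 * N ^ (m + 1) := by ring_nf; nlinarith [Nat.zero_le (N ^ m * N)]

end Defect

lemma exists_forall_lt_one_of_sum_lt_card {Ω ι : Type*} [Fintype Ω] [Fintype ι]
    (X : ι → Ω → ℝ) (Y : Ω → ℝ) (hX : ∀ j ω, 0 ≤ X j ω) (hY : ∀ ω, 0 ≤ Y ω)
    (h : ∑ ω, (∑ j, X j ω + Y ω) < Fintype.card Ω) :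
    ∃ ω, (∀ j, X j ω < 1) ∧ Y ω < 1 := by
  obtain ⟨ω, -, hω⟩ := exists_lt_of_sum_lt (h.trans_eq (by simp) :
    ∑ ω, (∑ j, X j ω + Y ω) < ∑ _ω : Ω, (1 : ℝ))
  have hXsum := sum_nonneg fun j (_ : j ∈ univ) => hX j ω
  refine ⟨ω, fun j => ?_, by linarith [hY ω]⟩
  have := single_le_sum (fun j _ => hX j ω) (mem_univ j)
  linarith [hY ω]

section Sampling

variable {α : Type*} [Fintype α]

noncomputable def centeredIndicator (p : α → Prop) [DecidablePred p] (a : α) : ℝ :=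
  (if p a then 1 else 0) - #{b | p b} / Fintype.card α

variable (p : α → Prop) [DecidablePred p]

lemma sum_centeredIndicator [Nonempty α] : ∑ a, centeredIndicator p a = 0 := by
  have : (Fintype.card α : ℝ) ≠ 0 := by positivity
  simp [centeredIndicator, sum_sub_distrib, sum_boole, mul_div_cancel₀ _ this]

lemma abs_centeredIndicator_le_one (a : α) : |centeredIndicator p a| ≤ 1 := by
  have h0 : 0 ≤ (#{b | p b} : ℝ) / Fintype.card α := by positivity
  have h1 : (#{b | p b} : ℝ) / Fintype.card α ≤ 1 :=
    div_le_one_of_le₀ (by exact_mod_cast card_le_univ _) (by positivity)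
  rw [centeredIndicator, abs_le]
  split_ifs <;> constructor <;> linarith

lemma sum_centeredIndicator_comp {m : ℕ} (f : Fin m → α) :
    ∑ i, centeredIndicator p (f i) = #{i | p (f i)} - m * #{b | p b} / Fintype.card α := by
  simp [centeredIndicator, sum_sub_distrib, sum_boole, mul_div_assoc]

variable [DecidableEq α] [Nonempty α]

theorem exists_sample_forall_abs_lt {ι : Type*} [Fintype ι] (P : ι → α → Prop)
    [∀ j, DecidablePred (P j)] {m : ℕ} {ρ : ℝ} (hρ : 0 < ρ)
    (h : Fintype.card ι * (3 * m ^ 2) / ρ ^ 4 + m ^ 2 / (Fintype.card α * ρ) < 1) :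
    ∃ f : Fin m → α, (∀ j, |∑ i, centeredIndicator (P j) (f i)| < ρ) ∧
      ((m - #(univ.image f) : ℕ) : ℝ) < ρ := by
  have hN : (0 : ℝ) < Fintype.card α := by positivity
  have hdefect : (∑ f : Fin m → α, ((m - #(univ.image f) : ℕ) : ℝ)) ≤
      m ^ 2 * Fintype.card α ^ m / Fintype.card α := by
    rw [le_div_iff₀ hN, mul_comm]
    exact_mod_cast card_mul_sum_sub_card_image_le (α := α) m
  obtain ⟨f, hdev, hrep⟩ := exists_forall_lt_one_of_sum_lt_card
    (fun j f => (∑ i, centeredIndicator (P j) (f i)) ^ 4 / ρ ^ 4)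
    (fun f => ((m - #(univ.image f) : ℕ) : ℝ) / ρ) (fun _ _ => by positivity)
    (fun _ => by positivity) <| calc
      ∑ f : Fin m → α, (∑ j, (∑ i, centeredIndicator (P j) (f i)) ^ 4 / ρ ^ 4
          + ((m - #(univ.image f) : ℕ) : ℝ) / ρ)
        = ∑ j, (∑ f : Fin m → α, (∑ i, centeredIndicator (P j) (f i)) ^ 4) / ρ ^ 4
          + (∑ f : Fin m → α, ((m - #(univ.image f) : ℕ) : ℝ)) / ρ := by
          simp only [sum_add_distrib, ← sum_div]; rw [sum_comm]
      _ ≤ ∑ _j : ι, 3 * m ^ 2 * Fintype.card α ^ m / ρ ^ 4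
          + m ^ 2 * Fintype.card α ^ m / Fintype.card α / ρ := by
          gcongr with j
          exact sum_sum_comp_pow_four_le (sum_centeredIndicator _)
            (abs_centeredIndicator_le_one _) m
      _ = Fintype.card α ^ m * (Fintype.card ι * (3 * m ^ 2) / ρ ^ 4
          + m ^ 2 / (Fintype.card α * ρ)) := by
          simp only [sum_const, card_univ, nsmul_eq_mul]; field_simp
      _ < Fintype.card α ^ m := mul_lt_of_lt_one_right (by positivity) h
      _ = Fintype.card (Fin m → α) := by simp
  refine ⟨f, fun j => ?_, (div_lt_one hρ).mp hrep⟩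
  have hj := (div_lt_one (by positivity)).mp (hdev j)
  rw [← (by decide : Even 4).pow_abs] at hj
  exact lt_of_pow_lt_pow_left₀ 4 hρ.le hj

end Sampling

theorem exists_card_eq_forall_abs_card_filter_sub_lt {α ι : Type*} [Fintype α] [DecidableEq α]
    [Nonempty α] [Fintype ι] (P : ι → α → Prop) [∀ j, DecidablePred (P j)] {m : ℕ}
    (hm : m ≤ Fintype.card α) {ρ : ℝ} (hρ : 0 < ρ)
    (h : Fintype.card ι * (3 * m ^ 2) / ρ ^ 4 + m ^ 2 / (Fintype.card α * ρ) < 1) :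
    ∃ V : Finset α, #V = m ∧
      ∀ j, |(#{a ∈ V | P j a} : ℝ) - m * #{a | P j a} / Fintype.card α| < 2 * ρ := by
  obtain ⟨f, hdev, hdefect⟩ := exists_sample_forall_abs_lt P hρ h
  obtain ⟨V, hfV, hV⟩ := exists_superset_card_eq (card_image_univ_le f) hm
  refine ⟨V, hV, fun j => ?_⟩
  have hclose := abs_card_filter_sub_card_filter_comp_le f hfV hV (P j)
  have hdevj := hdev j
  rw [sum_centeredIndicator_comp] at hdevj
  rw [Nat.cast_sub (card_image_univ_le f)] at hdefect
  calc _ ≤ |(#{a ∈ V | P j a} : ℝ) - #{i | P j (f i)}|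
        + |(#{i | P j (f i)} : ℝ) - m * #{a | P j a} / Fintype.card α| := abs_sub_le _ _ _
    _ < ρ + ρ := by linarith
    _ = 2 * ρ := by ring

lemma sample_size_bounds {n m : ℕ} {ε y : ℝ} (hε : 0 < ε) (hy : 3072 / ε ^ 4 + 32 / ε + 2 ≤ y)
    (hn : (n : ℝ) = y ^ 3) (hm : y ^ 2 ≤ m) (hm' : (m : ℝ) < y ^ 2 + 1) :
    0 < m ∧ m ≤ n ∧ 2 * n * (3 * m ^ 2) / (ε * m / 4) ^ 4 + m ^ 2 / (n * (ε * m / 4)) < 1 := by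
  have hA : 0 < 3072 / ε ^ 4 := by positivity
  have hB : 0 < 32 / ε := by positivity
  have hy2 : 2 ≤ y := by linarith
  have hε4 : 3072 ≤ ε ^ 4 * y := (div_le_iff₀' (by positivity)).mp (by linarith)
  have hε1 : 32 ≤ ε * y := (div_le_iff₀' hε).mp (by linarith)
  have hm0 : (0 : ℝ) < m := by nlinarith
  have hn0 : (0 : ℝ) < n := by rw [hn]; positivity
  -- These two make the deviation and repetition terms at most `1 / 2` and `1 / 4`.
  have h1 : 3072 * n ≤ ε ^ 4 * m ^ 2 := by
    have : y ^ 4 ≤ (m : ℝ) ^ 2 := by nlinarith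
    nlinarith [pow_pos hε 4, pow_pos (show 0 < y by linarith) 3]
  have h2 : 16 * m ≤ ε * n := by nlinarith
  refine ⟨by exact_mod_cast hm0, by exact_mod_cast (show (m : ℝ) ≤ n by nlinarith), ?_⟩
  have hdev_term : 2 * n * (3 * m ^ 2) / (ε * m / 4) ^ 4 ≤ 1 / 2 := by
    rw [div_le_iff₀ (by positivity)]
    nlinarith [mul_le_mul_of_nonneg_right h1 (sq_nonneg (m : ℝ))]
  have hrep_term : (m : ℝ) ^ 2 / (n * (ε * m / 4)) ≤ 1 / 4 := by
    rw [div_le_iff₀ (by positivity)]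
    nlinarith [mul_le_mul_of_nonneg_right h2 hm0.le]
  linarith

open Filter in
lemma eventually_sample_size_bounds {ε : ℝ} (hε : 0 < ε) :
    ∀ᶠ n : ℕ in atTop, ∀ m : ℕ, m = ⌈(n : ℝ) ^ ((2 : ℝ) / 3)⌉₊ →
      0 < m ∧ m ≤ n ∧ 2 * n * (3 * m ^ 2) / (ε * m / 4) ^ 4 + m ^ 2 / (n * (ε * m / 4)) < 1 := by
  have hcube_root : Tendsto (fun n : ℕ => (n : ℝ) ^ ((1 : ℝ) / 3)) atTop atTop :=
    (tendsto_rpow_atTop (by norm_num)).comp tendsto_natCast_atTop_atTop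
  filter_upwards [hcube_root.eventually_ge_atTop (3072 / ε ^ 4 + 32 / ε + 2)] with n hn m hm
  have hn3 : (n : ℝ) = ((n : ℝ) ^ ((1 : ℝ) / 3)) ^ 3 := by
    rw [← Real.rpow_natCast, ← Real.rpow_mul (Nat.cast_nonneg n)]; norm_num
  have hn2 : ((n : ℝ) ^ ((1 : ℝ) / 3)) ^ 2 = (n : ℝ) ^ ((2 : ℝ) / 3) := by
    rw [← Real.rpow_natCast, ← Real.rpow_mul (Nat.cast_nonneg n)]; norm_num
  subst hm
  exact sample_size_bounds hε hn hn3 (by rw [hn2]; exact Nat.le_ceil _)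
    (by rw [hn2]; exact Nat.ceil_lt_add_one (by positivity))

lemma lt_and_lt_of_abs_sub_mul_div_lt {x d c ε m n : ℝ} (hn : 0 < n) (hm : 0 < m)
    (hx : |x - m * d / n| < 2 * (ε * m / 4)) (hd₁ : (c - ε) * n < d) (hd₂ : d < (c + ε) * n) :
    (c - 2 * ε) * m < x ∧ x < (c + 2 * ε) * m := by
  have hε : 0 < ε := by nlinarith [abs_nonneg (x - m * d / n)]
  have hlo : (c - ε) * m < m * d / n := by rw [lt_div_iff₀ hn]; nlinarith
  have hhi : m * d / n < (c + ε) * m := by rw [div_lt_iff₀ hn]; nlinarith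
  rw [abs_lt] at hx
  constructor <;> nlinarith

theorem stmt_15_general (c ε : ℝ) (hε0 : 0 < ε) :
    ∃ n₀ : ℕ, ∀ n : ℕ, n₀ ≤ n →
      ∀ R : Fin n → Fin n → Prop,
        -- `R` is an oriented graph: no loops and no 2-cycles
        (∀ u v, R u v → ¬ R v u) →
        (∀ v, (c - ε) * n < (outDeg R v : ℝ) ∧ (outDeg R v : ℝ) < (c + ε) * n ∧
              (c - ε) * n < (inDeg R v : ℝ) ∧ (inDeg R v : ℝ) < (c + ε) * n) →
        ∃ V₀ : Finset (Fin n), V₀.card = ⌈(n : ℝ) ^ ((2 : ℝ) / 3)⌉₊ ∧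
          ∀ v : Fin n,
            (c - 2 * ε) * V₀.card < (Set.ncard {u | u ∈ V₀ ∧ R v u} : ℝ) ∧
            (Set.ncard {u | u ∈ V₀ ∧ R v u} : ℝ) < (c + 2 * ε) * V₀.card ∧
            (c - 2 * ε) * V₀.card < (Set.ncard {u | u ∈ V₀ ∧ R u v} : ℝ) ∧
            (Set.ncard {u | u ∈ V₀ ∧ R u v} : ℝ) < (c + 2 * ε) * V₀.card := by
  classical
  obtain ⟨n₀, hn₀⟩ := Filter.eventually_atTop.mp (eventually_sample_size_bounds hε0)
  refine ⟨n₀, fun n hn R _ hdeg => ?_⟩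
  set m := ⌈(n : ℝ) ^ ((2 : ℝ) / 3)⌉₊
  obtain ⟨hm0, hmn, hbound⟩ := hn₀ n hn m rfl
  have : Nonempty (Fin n) := ⟨⟨0, by omega⟩⟩
  obtain ⟨V₀, hV₀, hdev⟩ := exists_card_eq_forall_abs_card_filter_sub_lt (Sum.elim R (flip R))
    (by simpa using hmn) (by positivity : 0 < ε * m / 4) (by simpa [two_mul] using hbound)
  refine ⟨V₀, hV₀, fun v => ?_⟩
  obtain ⟨hout₁, hout₂, hin₁, hin₂⟩ := hdeg v
  simp only [outDeg, inDeg, Set.ncard_eq_toFinset_card', Set.toFinset_ofPred]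
    at hout₁ hout₂ hin₁ hin₂
  have hout := hdev (Sum.inl v)
  have hin := hdev (Sum.inr v)
  simp only [Sum.elim_inl, Sum.elim_inr, flip, Fintype.card_fin] at hout hin
  simp only [← coe_filter, Set.ncard_coe_finset, hV₀]
  have hnR : (0 : ℝ) < n := by exact_mod_cast hm0.trans_le hmn
  have hmR : (0 : ℝ) < m := by exact_mod_cast hm0
  exact and_assoc.mp ⟨lt_and_lt_of_abs_sub_mul_div_lt hnR hmR hout hout₁ hout₂,
    lt_and_lt_of_abs_sub_mul_div_lt hnR hmR hin hin₁ hin₂⟩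

theorem stmt_15 (c ε : ℝ) (hc : 0 < c) (hε0 : 0 < ε) (hε1 : ε < c / 2) :
    ∃ n₀ : ℕ, ∀ n : ℕ, n₀ ≤ n →
      ∀ R : Fin n → Fin n → Prop,
        -- `R` is an oriented graph: no loops and no 2-cycles
        (∀ u v, R u v → ¬ R v u) →
        (∀ v, (c - ε) * n < (outDeg R v : ℝ) ∧ (outDeg R v : ℝ) < (c + ε) * n ∧
              (c - ε) * n < (inDeg R v : ℝ) ∧ (inDeg R v : ℝ) < (c + ε) * n) →
        ∃ V₀ : Finset (Fin n), V₀.card = ⌈(n : ℝ) ^ ((2 : ℝ) / 3)⌉₊ ∧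
          ∀ v : Fin n,
            (c - 2 * ε) * V₀.card < (Set.ncard {u | u ∈ V₀ ∧ R v u} : ℝ) ∧
            (Set.ncard {u | u ∈ V₀ ∧ R v u} : ℝ) < (c + 2 * ε) * V₀.card ∧
            (c - 2 * ε) * V₀.card < (Set.ncard {u | u ∈ V₀ ∧ R u v} : ℝ) ∧
            (Set.ncard {u | u ∈ V₀ ∧ R u v} : ℝ) < (c + 2 * ε) * V₀.card :=
  stmt_15_general c ε hε0
end

section
/- Let G be an oriented graph on n vertices with δ±(G) ≥ 3n/8. Then for every ordered pair of distinct vertices x, y of G there exists a directed path in G from x to y of length at most 4. -/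
open Finset Classical

section InducedDegrees

variable {V : Type*} [DecidableEq V] {R : V → V → Prop}

lemma card_filter_add_card_filter_add_one_le (hR : ∀ u v, R u v → ¬ R v u)
    (A : Finset V) {a : V} (ha : a ∈ A) :
    #{u ∈ A | R a u} + #{u ∈ A | R u a} + 1 ≤ #A := by
  have hdisj : Disjoint {u ∈ A | R a u} {u ∈ A | R u a} :=
    disjoint_filter.2 fun u _ hau hua => hR a u hau hua
  have hsub : {u ∈ A | R a u} ∪ {u ∈ A | R u a} ⊆ A.erase a := by
    intro u hu
    simp only [mem_union, mem_filter] at hu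
    rcases hu with ⟨hu, h⟩ | ⟨hu, h⟩ <;>
      exact mem_erase.2 ⟨by rintro rfl; exact hR u u h h, hu⟩
  have := card_le_card hsub
  rw [card_union_of_disjoint hdisj, card_erase_of_mem ha] at this
  have := card_pos.2 ⟨a, ha⟩
  omega

-- Out- and in-degrees inside `A` have the same sum, so some out-degree is at most the average
-- of `(out + in) / 2`, which is at most `(#A - 1) / 2` by the previous lemma.
lemma exists_two_mul_card_filter_add_one_le (hR : ∀ u v, R u v → ¬ R v u)
    {A : Finset V} (hA : A.Nonempty) :
    ∃ a ∈ A, 2 * #{u ∈ A | R a u} + 1 ≤ #A := by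
  apply exists_le_of_sum_le hA
  have hswap := sum_card_bipartiteAbove_eq_sum_card_bipartiteBelow R (s := A) (t := A)
  simp only [bipartiteAbove, bipartiteBelow] at hswap
  calc ∑ a ∈ A, (2 * #{u ∈ A | R a u} + 1)
      = ∑ a ∈ A, (#{u ∈ A | R a u} + #{u ∈ A | R u a} + 1) := by
        rw [sum_add_distrib, sum_add_distrib, sum_add_distrib, ← hswap, ← mul_sum, two_mul]
    _ ≤ ∑ _a ∈ A, #A := sum_le_sum fun a ha => card_filter_add_card_filter_add_one_le hR A ha

end InducedDegrees

section Neighbourhoods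

variable {V : Type*} [Fintype V] {R : V → V → Prop}

noncomputable def outNbrs (R : V → V → Prop) (v : V) : Finset V := {u | R v u}

@[simp]
lemma mem_outNbrs {v u : V} : u ∈ outNbrs R v ↔ R v u := by
  simp [outNbrs]

lemma ncard_setOf_eq_card_outNbrs (v : V) : {u | R v u}.ncard = #(outNbrs R v) := by
  rw [← Set.ncard_coe_finset]
  congr
  ext
  simp

variable [DecidableEq V]

noncomputable def closedOutNbhd (R : V → V → Prop) (A : Finset V) : Finset V :=
  A ∪ A.biUnion (outNbrs R)

lemma mem_closedOutNbhd {A : Finset V} {u : V} :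
    u ∈ closedOutNbhd R A ↔ u ∈ A ∨ ∃ a ∈ A, R a u := by
  simp [closedOutNbhd]

lemma subset_closedOutNbhd (A : Finset V) : A ⊆ closedOutNbhd R A :=
  subset_union_left

lemma outNbrs_subset_closedOutNbhd {A : Finset V} {a : V} (ha : a ∈ A) :
    outNbrs R a ⊆ closedOutNbhd R A :=
  fun _ hu => mem_closedOutNbhd.2 (Or.inr ⟨a, ha, mem_outNbrs.1 hu⟩)

variable (hR : ∀ u v, R u v → ¬ R v u)
include hR

lemma exists_two_mul_card_outNbrs_add_le {A : Finset V} (hA : A.Nonempty) :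
    ∃ a ∈ A, 2 * #(outNbrs R a) + #A + 1 ≤ 2 * #(closedOutNbhd R A) := by
  obtain ⟨a, ha, hle⟩ := exists_two_mul_card_filter_add_one_le hR hA
  refine ⟨a, ha, ?_⟩
  have hsub : outNbrs R a ⊆ {u ∈ A | R a u} ∪ (closedOutNbhd R A \ A) := by
    intro u hu
    by_cases huA : u ∈ A
    · exact mem_union_left _ (mem_filter.2 ⟨huA, mem_outNbrs.1 hu⟩)
    · exact mem_union_right _ (mem_sdiff.2 ⟨outNbrs_subset_closedOutNbhd ha hu, huA⟩)
  have := (card_le_card hsub).trans (card_union_le _ _)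
  rw [card_sdiff_of_subset (subset_closedOutNbhd A)] at this
  have := card_le_card (subset_closedOutNbhd (R := R) A)
  omega

lemma notMem_closedOutNbhd_outNbrs_self (x : V) : x ∉ closedOutNbhd R (outNbrs R x) := by
  simp only [mem_closedOutNbhd, mem_outNbrs, not_or, not_exists, not_and]
  exact ⟨fun h => hR x x h h, fun a hxa hax => hR x a hxa hax⟩

lemma not_disjoint_closedOutNbhd_of_minDegree
    (hdeg : ∀ v, 3 * Fintype.card V ≤ 8 * #(outNbrs R v) ∧
      3 * Fintype.card V ≤ 8 * #(outNbrs (flip R) v))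
    {x y : V} (hxy : x ≠ y) (hnxy : ¬ R x y) :
    ¬ Disjoint (closedOutNbhd R (outNbrs R x)) (closedOutNbhd (flip R) (outNbrs (flip R) y)) := by
  intro hdisj
  have hR' : ∀ u v, flip R u v → ¬ flip R v u := fun u v h h' => hR v u h h'
  have hV : 0 < Fintype.card V := Fintype.card_pos_iff.2 ⟨x⟩
  have hA : (outNbrs R x).Nonempty := by
    rw [← card_pos]; have := (hdeg x).1; omega
  have hB : (outNbrs (flip R) y).Nonempty := by
    rw [← card_pos]; have := (hdeg y).2; omega
  obtain ⟨a, -, ha⟩ := exists_two_mul_card_outNbrs_add_le hR hA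
  obtain ⟨b, -, hb⟩ := exists_two_mul_card_outNbrs_add_le hR' hB
  set D₁ := closedOutNbhd R (outNbrs R x)
  set D₂ := closedOutNbhd (flip R) (outNbrs (flip R) y)
  have hyD₁ : y ∉ D₁ := by
    rw [mem_closedOutNbhd]
    rintro (h | ⟨a, ha, hay⟩)
    · exact hnxy (mem_outNbrs.1 h)
    · exact disjoint_left.1 hdisj (subset_closedOutNbhd _ ha)
        (subset_closedOutNbhd _ (mem_outNbrs.2 hay))
  have hxD₂ : x ∉ D₂ := by
    rw [mem_closedOutNbhd]
    rintro (h | ⟨b, hb, hxb⟩)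
    · exact hnxy ((mem_outNbrs (R := flip R)).1 h)
    · exact disjoint_left.1 hdisj (subset_closedOutNbhd _ (mem_outNbrs.2 hxb))
        (subset_closedOutNbhd _ hb)
  have hxy_out : Disjoint (D₁ ∪ D₂) {x, y} := by
    simp only [disjoint_insert_right, disjoint_singleton_right, mem_union, not_or]
    exact ⟨⟨notMem_closedOutNbhd_outNbrs_self hR x, hxD₂⟩,
      hyD₁, notMem_closedOutNbhd_outNbrs_self hR' y⟩
  have hcard : #D₁ + #D₂ + 2 ≤ Fintype.card V := by
    calc #D₁ + #D₂ + 2 = #(D₁ ∪ D₂ ∪ {x, y}) := by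
          rw [card_union_of_disjoint hxy_out, card_union_of_disjoint hdisj, card_pair hxy]
      _ ≤ Fintype.card V := card_le_univ _
  have := (hdeg a).1
  have := (hdeg b).2
  have := (hdeg x).1
  have := (hdeg y).2
  omega

lemma exists_path_of_not_disjoint_closedOutNbhd {x y : V} (hxy : x ≠ y) (hnxy : ¬ R x y)
    (h : ¬ Disjoint (closedOutNbhd R (outNbrs R x))
      (closedOutNbhd (flip R) (outNbrs (flip R) y))) :
    ∃ l : List V, l.Nodup ∧ l.IsChain R ∧
      l.head? = some x ∧ l.getLast? = some y ∧ l.length ≤ 5 := by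
  obtain ⟨u, hu₁, hu₂⟩ := not_disjoint_iff.1 h
  simp only [mem_closedOutNbhd, mem_outNbrs, flip] at hu₁ hu₂
  -- Two equal vertices in the walks below would give a loop, a 2-cycle or the edge `x → y`.
  rcases hu₁ with hxu | ⟨a, hxa, hau⟩ <;> rcases hu₂ with huy | ⟨b, hby, hub⟩
  · exact ⟨[x, u, y], by simp; grind, by simp [*], rfl, rfl, by simp⟩
  · exact ⟨[x, u, b, y], by simp; grind, by simp [*], rfl, rfl, by simp⟩
  · exact ⟨[x, a, u, y], by simp; grind, by simp [*], rfl, rfl, by simp⟩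
  · exact ⟨[x, a, u, b, y], by simp; grind, by simp [*], rfl, rfl, by simp⟩

end Neighbourhoods

theorem stmt_16 {n : ℕ} (R : Fin n → Fin n → Prop)
    -- `R` is an oriented graph: no loops and no 2-cycles
    (horient : ∀ u v, R u v → ¬ R v u)
    -- minimum semi-degree at least 3n/8
    (hdeg : ∀ v, 3 * (n : ℝ) / 8 ≤ (outDeg R v : ℝ) ∧ 3 * (n : ℝ) / 8 ≤ (inDeg R v : ℝ))
    (x y : Fin n) (hxy : x ≠ y) :
    -- a directed path from x to y with at most 4 edges
    ∃ l : List (Fin n), l.Nodup ∧ l.Chain' R ∧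
      l.head? = some x ∧ l.getLast? = some y ∧ l.length ≤ 5 := by
  by_cases hnxy : R x y
  · exact ⟨[x, y], by simp [hxy], List.isChain_pair.2 hnxy, rfl, rfl, by simp⟩
  have hdeg' : ∀ v, 3 * Fintype.card (Fin n) ≤ 8 * #(outNbrs R v) ∧
      3 * Fintype.card (Fin n) ≤ 8 * #(outNbrs (flip R) v) := by
    intro v
    obtain ⟨hout, hin⟩ := hdeg v
    rw [outDeg, ncard_setOf_eq_card_outNbrs] at hout
    rw [inDeg, show {u | R u v}.ncard = #(outNbrs (flip R) v) from
      ncard_setOf_eq_card_outNbrs (R := flip R) v] at hin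
    have h8 : ∀ k : ℕ, 3 * (n : ℝ) / 8 ≤ k → 3 * n ≤ 8 * k := fun k hk => by
      exact_mod_cast (by linarith : (3 * n : ℝ) ≤ 8 * k)
    rw [Fintype.card_fin]
    exact ⟨h8 _ hout, h8 _ hin⟩
  exact exists_path_of_not_disjoint_closedOutNbhd horient hxy hnxy
    (not_disjoint_closedOutNbhd_of_minDegree horient hdeg' hxy hnxy)
end

section
/- Let A be an n×n matrix with all entries 0 or 1, and for each i let r_i denote the number of ones in the i-th row of A. Then per(A) ≤ ∏_{i=1}^{n} (r_i!)^{1/r_i}, where factors with r_i = 0 are interpreted as 1. -/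
/-!
Schrijver's proof. Read `per A` as the number `p` of transversals of the row sets `R i`
(injective choices of a column in each row), and let `p i k` be the number of transversals of
the minor without row `i` and column `k`. Expanding along row `i`, `p = ∑_{k ∈ R i} p i k`, so
convexity of `x log x` gives `p ^ p ≤ r_i ^ p ∏_k (p i k) ^ (p i k) = r_i ^ p ∏_σ p i (σ i)`,
the last product running over all transversals `σ`. Multiplying over the `n` rows,
`p ^ (n p) ≤ ∏_σ ∏_i r_i p i (σ i)`. By induction `p i (σ i)` is at most the Bregman bound of
its minor, in which row `j ≠ i` has lost a column exactly when `σ i ∈ R j`; as `σ` maps the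
rows onto the columns, this happens for `r_j - 1` indices `i`. Since `r_j (r_j - 1)! = r_j!`,
the factors belonging to row `j` multiply to `(r_j!) ^ (n / r_j)`, and so
`p ^ (n p) ≤ (∏_j (r_j!) ^ (1 / r_j)) ^ (n p)`.
-/

noncomputable def perm {n : ℕ} (A : Matrix (Fin n) (Fin n) ℝ) : ℝ :=
  ∑ σ : Equiv.Perm (Fin n), ∏ i, A i (σ i)

open Finset Real
open scoped Nat

namespace Bregman

lemma sum_mul_log_sum_le {ι : Type*} (s : Finset ι) (x : ι → ℝ) (hx : ∀ k ∈ s, 0 ≤ x k) :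
    (∑ k ∈ s, x k) * log (∑ k ∈ s, x k) ≤ (∑ k ∈ s, x k) * log #s + ∑ k ∈ s, x k * log (x k) := by
  rcases s.eq_empty_or_nonempty with rfl | hs
  · simp
  set S := ∑ k ∈ s, x k
  have hm : (0 : ℝ) < #s := by exact_mod_cast hs.card_pos
  have jensen := convexOn_mul_log.map_sum_le (t := s) (w := fun _ => (#s : ℝ)⁻¹) (p := x)
    (fun _ _ => by positivity) (by simp [hm.ne']) hx
  simp only [smul_eq_mul, ← mul_sum] at jensen
  have hlog : S * log ((#s : ℝ)⁻¹ * S) = S * log S - S * log #s := by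
    rcases eq_or_ne S 0 with h | h
    · simp [h]
    · rw [log_mul (by positivity) h, log_inv]
      ring
  have := mul_le_mul_of_nonneg_left jensen hm.le
  rw [mul_assoc, mul_inv_cancel_left₀ hm.ne', mul_inv_cancel_left₀ hm.ne'] at this
  linarith

lemma sum_pow_sum_le {ι : Type*} (s : Finset ι) (t : ι → ℕ) :
    ((∑ k ∈ s, t k : ℕ) : ℝ) ^ (∑ k ∈ s, t k) ≤
      (#s : ℝ) ^ (∑ k ∈ s, t k) * ∏ k ∈ s, (t k : ℝ) ^ t k := by
  rcases s.eq_empty_or_nonempty with rfl | hs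
  · simp
  have hm : (0 : ℝ) < #s := by exact_mod_cast hs.card_pos
  have hpow (n : ℕ) : (0 : ℝ) < (n : ℝ) ^ n := by exact_mod_cast Nat.pow_self_pos
  have hprod : 0 < ∏ k ∈ s, (t k : ℝ) ^ t k := prod_pos fun k _ => hpow (t k)
  rw [← log_le_log_iff (hpow _) (by positivity), log_mul (by positivity) hprod.ne',
    log_prod fun k _ => (hpow _).ne']
  simp only [Real.log_pow]
  push_cast
  exact sum_mul_log_sum_le s _ fun k _ => by positivity

-- `bregmanFactor 0 = 1`, as `1 / 0 = 0` in `ℝ`.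
noncomputable def bregmanFactor (r : ℕ) : ℝ := (r ! : ℝ) ^ ((1 : ℝ) / r)

lemma bregmanFactor_nonneg (r : ℕ) : 0 ≤ bregmanFactor r := by
  unfold bregmanFactor
  positivity

lemma bregmanFactor_pow_self (r : ℕ) : bregmanFactor r ^ r = r ! := by
  rcases r.eq_zero_or_pos with rfl | hr
  · simp
  · rw [bregmanFactor, ← rpow_natCast, ← rpow_mul (by positivity),
      one_div_mul_cancel (by positivity), rpow_one]

lemma natCast_mul_bregmanFactor_pow {r N : ℕ} (hr : 1 ≤ r) (hrN : r ≤ N) :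
    r * (bregmanFactor (r - 1) ^ (r - 1) * bregmanFactor r ^ (N - r)) = bregmanFactor r ^ N := by
  rw [bregmanFactor_pow_self, ← mul_assoc]
  have : (r : ℝ) * (r - 1)! = r ! := by exact_mod_cast Nat.mul_factorial_pred (by omega)
  rw [this, ← bregmanFactor_pow_self, ← pow_add]
  congr 1
  omega

variable {α : Type*} [DecidableEq α]

def minor (R : α → Finset α) (k a : α) : Finset α := (R a).erase k

@[simp]
lemma minor_apply (R : α → Finset α) (k a : α) : minor R k a = (R a).erase k := rfl

variable [Fintype α]

-- Outside `I` a transversal is normalised to the identity, so that transversals of `I` form a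
-- finite set of total functions.
open Classical in
noncomputable def transversals (I : Finset α) (R : α → Finset α) : Finset (α → α) :=
  univ.filter fun f => (∀ a ∉ I, f a = a) ∧ (∀ a ∈ I, f a ∈ R a) ∧ Set.InjOn f I

@[simp]
lemma mem_transversals {I : Finset α} {R : α → Finset α} {f : α → α} :
    f ∈ transversals I R ↔ (∀ a ∉ I, f a = a) ∧ (∀ a ∈ I, f a ∈ R a) ∧ Set.InjOn f I := by
  simp [transversals]

lemma card_transversals_empty (R : α → Finset α) : #(transversals ∅ R) = 1 :=
  card_eq_one.2 ⟨id, eq_singleton_iff_unique_mem.2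
    ⟨by simp, fun f hf => funext <| by simpa using hf⟩⟩

lemma card_filter_transversals_apply_eq (I : Finset α) (R : α → Finset α) {i k : α} (hi : i ∈ I)
    (hk : k ∈ R i) :
    #{f ∈ transversals I R | f i = k} = #(transversals (I.erase i) (minor R k)) := by
  refine card_nbij' (Function.update · i i) (Function.update · i k) ?_ ?_ ?_ ?_
  · intro f hf
    obtain ⟨hfT, rfl⟩ := mem_filter.1 hf
    obtain ⟨hfix, hmem, hinj⟩ := mem_transversals.1 hfT
    refine mem_transversals.2 ⟨fun a ha => ?_, fun a ha => ?_, ?_⟩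
    · rcases eq_or_ne a i with rfl | hai
      · simp
      · simpa [hai] using hfix a (by simp_all)
    · have hai := ne_of_mem_erase ha
      have haI := mem_of_mem_erase ha
      simpa [hai, hmem a haI] using fun h => hai (hinj haI hi h)
    · exact (hinj.mono (by simp)).congr fun a ha => by simp [ne_of_mem_erase ha]
  · intro g hg
    obtain ⟨hfix, hmem, hinj⟩ := mem_transversals.1 hg
    refine mem_filter.2 ⟨mem_transversals.2 ⟨fun a ha => ?_, fun a ha => ?_, ?_⟩, by simp⟩
    · have hai : a ≠ i := by rintro rfl; exact ha hi
      simpa [hai] using hfix a (by simp_all)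
    · rcases eq_or_ne a i with rfl | hai
      · simpa
      · simpa [hai] using (mem_erase.1 (hmem a (mem_erase.2 ⟨hai, ha⟩))).2
    · rw [← insert_erase hi, coe_insert, Set.injOn_insert (by simp)]
      refine ⟨hinj.congr fun a ha => by simp [ne_of_mem_erase ha], ?_⟩
      rintro ⟨a, ha, hak⟩
      have hai := ne_of_mem_erase ha
      simp only [Function.update_self, Function.update_of_ne hai] at hak
      exact (ne_of_mem_erase (hmem a ha)) hak
  · intro f hf
    simp [← (mem_filter.1 hf).2]
  · intro g hg
    dsimp only
    rw [Function.update_idem, Function.update_eq_self_iff]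
    exact ((mem_transversals.1 hg).1 i (notMem_erase i I)).symm

lemma card_transversals_eq_sum (I : Finset α) (R : α → Finset α) {i : α} (hi : i ∈ I) :
    #(transversals I R) = ∑ k ∈ R i, #(transversals (I.erase i) (minor R k)) := by
  rw [card_eq_sum_card_fiberwise fun f hf => (mem_transversals.1 hf).2.1 i hi]
  exact sum_congr rfl fun k hk => card_filter_transversals_apply_eq I R hi hk

lemma card_transversals_pow_le (I : Finset α) (R : α → Finset α) {i : α} (hi : i ∈ I) :
    (#(transversals I R) : ℝ) ^ #(transversals I R) ≤
      (#(R i) : ℝ) ^ #(transversals I R) *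
        ∏ f ∈ transversals I R, (#(transversals (I.erase i) (minor R (f i))) : ℝ) := by
  have h := sum_pow_sum_le (R i) fun k => #(transversals (I.erase i) (minor R k))
  rw [← card_transversals_eq_sum I R hi] at h
  refine h.trans_eq (congrArg _ ?_)
  rw [← prod_fiberwise_of_maps_to' (g := fun f => f i) (t := R i)
    (fun f hf => (mem_transversals.1 hf).2.1 i hi)
    (fun k => (#(transversals (I.erase i) (minor R k)) : ℝ))]
  refine prod_congr rfl fun k hk => ?_
  rw [prod_const, card_filter_transversals_apply_eq I R hi hk]

lemma card_transversals_pow_mul_card_le (I : Finset α) (R : α → Finset α) :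
    (#(transversals I R) : ℝ) ^ (#(transversals I R) * #I) ≤
      ∏ f ∈ transversals I R, ∏ i ∈ I,
        ((#(R i) : ℝ) * #(transversals (I.erase i) (minor R (f i)))) :=
  calc (#(transversals I R) : ℝ) ^ (#(transversals I R) * #I)
      = ∏ i ∈ I, (#(transversals I R) : ℝ) ^ #(transversals I R) := by rw [prod_const, pow_mul]
    _ ≤ ∏ i ∈ I, ((#(R i) : ℝ) ^ #(transversals I R) *
          ∏ f ∈ transversals I R, (#(transversals (I.erase i) (minor R (f i))) : ℝ)) :=
        prod_le_prod (fun _ _ => by positivity) fun i hi => card_transversals_pow_le I R hi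
    _ = _ := by
        rw [prod_mul_distrib, prod_pow, prod_comm]
        simp only [prod_mul_distrib, prod_const]

section Square

variable {I J : Finset α} {R : α → Finset α} {f : α → α}

lemma image_eq_of_mem_transversals (hf : f ∈ transversals I R) (hIJ : #I = #J)
    (hRJ : ∀ a ∈ I, R a ⊆ J) : I.image f = J := by
  obtain ⟨-, hmem, hinj⟩ := mem_transversals.1 hf
  refine eq_of_subset_of_card_le (image_subset_iff.2 fun a ha => hRJ a ha (hmem a ha)) ?_
  rw [card_image_of_injOn hinj, hIJ]

lemma card_filter_erase_apply_mem (hf : f ∈ transversals I R) (hIJ : #I = #J)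
    (hRJ : ∀ a ∈ I, R a ⊆ J) {j : α} (hj : j ∈ I) :
    #{i ∈ I.erase j | f i ∈ R j} = #(R j) - 1 := by
  obtain ⟨-, hmem, hinj⟩ := mem_transversals.1 hf
  have hfilter : #{i ∈ I | f i ∈ R j} = #(R j) := by
    rw [← card_image_of_injOn (hinj.mono (filter_subset _ _)), ← filter_image (p := (· ∈ R j)),
      image_eq_of_mem_transversals hf hIJ hRJ, filter_mem_eq_inter, inter_eq_right.2 (hRJ j hj)]
  rw [filter_erase, card_erase_of_mem (mem_filter.2 ⟨hj, hmem j hj⟩), hfilter]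

lemma prod_erase_card_minor {M : Type*} [CommMonoid M] (g : ℕ → M) (hf : f ∈ transversals I R)
    (hIJ : #I = #J) (hRJ : ∀ a ∈ I, R a ⊆ J) {j : α} (hj : j ∈ I) :
    ∏ i ∈ I.erase j, g #(minor R (f i) j) =
      g (#(R j) - 1) ^ (#(R j) - 1) * g #(R j) ^ (#I - #(R j)) := by
  have hfj : f j ∈ R j := (mem_transversals.1 hf).2.1 j hj
  have hcard := card_filter_add_card_filter_not (s := I.erase j) (p := fun i => f i ∈ R j)
  rw [card_filter_erase_apply_mem hf hIJ hRJ hj, card_erase_of_mem hj] at hcard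
  have hpos : 0 < #(R j) := card_pos.2 ⟨_, hfj⟩
  have hle : #(R j) ≤ #I := hIJ ▸ card_le_card (hRJ j hj)
  rw [← prod_filter_mul_prod_filter_not (I.erase j) (fun i => f i ∈ R j)]
  congr 1
  · rw [prod_congr rfl fun i hi => by rw [minor_apply, card_erase_of_mem (mem_filter.1 hi).2],
      prod_const, card_filter_erase_apply_mem hf hIJ hRJ hj]
  · rw [prod_congr rfl fun i hi => by rw [minor_apply, erase_eq_of_notMem (mem_filter.1 hi).2],
      prod_const]
    congr 1
    omega

lemma prod_card_mul_card_minor_le (hf : f ∈ transversals I R) (hIJ : #I = #J)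
    (hRJ : ∀ a ∈ I, R a ⊆ J)
    (hminor : ∀ i ∈ I, (#(transversals (I.erase i) (minor R (f i))) : ℝ) ≤
      ∏ j ∈ I.erase i, bregmanFactor #(minor R (f i) j)) :
    ∏ i ∈ I, ((#(R i) : ℝ) * #(transversals (I.erase i) (minor R (f i)))) ≤
      (∏ j ∈ I, bregmanFactor #(R j)) ^ #I := by
  have hpos : ∀ j ∈ I, 1 ≤ #(R j) := fun j hj => card_pos.2 ⟨f j, (mem_transversals.1 hf).2.1 j hj⟩
  have hle : ∀ j ∈ I, #(R j) ≤ #I := fun j hj => hIJ ▸ card_le_card (hRJ j hj)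
  calc ∏ i ∈ I, ((#(R i) : ℝ) * #(transversals (I.erase i) (minor R (f i))))
      ≤ ∏ i ∈ I, ((#(R i) : ℝ) * ∏ j ∈ I.erase i, bregmanFactor #(minor R (f i) j)) := by
        gcongr with i hi
        exact hminor i hi
    _ = (∏ j ∈ I, (#(R j) : ℝ)) * ∏ j ∈ I, ∏ i ∈ I.erase j, bregmanFactor #(minor R (f i) j) := by
        rw [prod_mul_distrib]
        congr 1
        refine prod_comm' fun i j => ?_
        simp only [mem_erase]
        tauto
    _ = ∏ j ∈ I, bregmanFactor #(R j) ^ #I := by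
        rw [← prod_mul_distrib]
        refine prod_congr rfl fun j hj => ?_
        rw [prod_erase_card_minor _ hf hIJ hRJ hj,
          natCast_mul_bregmanFactor_pow (hpos j hj) (hle j hj)]
    _ = _ := prod_pow _ _ _

end Square

theorem card_transversals_le (I J : Finset α) (R : α → Finset α) (hIJ : #I = #J)
    (hRJ : ∀ a ∈ I, R a ⊆ J) : (#(transversals I R) : ℝ) ≤ ∏ a ∈ I, bregmanFactor #(R a) := by
  induction I using Finset.strongInduction generalizing J R with
  | H I ih =>
  rcases Nat.eq_zero_or_pos #(transversals I R) with hzero | hpos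
  · rw [hzero, Nat.cast_zero]
    exact prod_nonneg fun a _ => bregmanFactor_nonneg _
  rcases I.eq_empty_or_nonempty with rfl | hI
  · rw [card_transversals_empty, prod_empty, Nat.cast_one]
  have hbound : ∀ f ∈ transversals I R, ∏ i ∈ I,
      ((#(R i) : ℝ) * #(transversals (I.erase i) (minor R (f i)))) ≤
        (∏ j ∈ I, bregmanFactor #(R j)) ^ #I := by
    intro f hf
    refine prod_card_mul_card_minor_le hf hIJ hRJ fun i hi => ?_
    have hfi : f i ∈ J := hRJ i hi ((mem_transversals.1 hf).2.1 i hi)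
    refine ih _ (erase_ssubset hi) (J.erase (f i)) _ ?_ fun a ha => ?_
    · rw [card_erase_of_mem hi, card_erase_of_mem hfi, hIJ]
    · exact erase_subset_erase _ (hRJ a (mem_of_mem_erase ha))
  refine le_of_pow_le_pow_left₀ (Nat.mul_ne_zero hpos.ne' hI.card_pos.ne')
    (prod_nonneg fun a _ => bregmanFactor_nonneg _) ?_
  calc (#(transversals I R) : ℝ) ^ (#(transversals I R) * #I)
      ≤ ∏ f ∈ transversals I R, (∏ j ∈ I, bregmanFactor #(R j)) ^ #I :=
        (card_transversals_pow_mul_card_le I R).trans <|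
          prod_le_prod (fun f _ => prod_nonneg fun i _ => by positivity) hbound
    _ = (∏ j ∈ I, bregmanFactor #(R j)) ^ (#(transversals I R) * #I) := by
        rw [prod_const, ← pow_mul, mul_comm]

lemma card_transversals_univ (R : α → Finset α) :
    #(transversals univ R) = #{σ : Equiv.Perm α | ∀ a, σ a ∈ R a} := by
  symm
  refine card_nbij (fun σ => ⇑σ) (fun σ hσ => ?_) DFunLike.coe_injective.injOn fun f hf => ?_
  · simpa [σ.injective.injOn] using hσ
  · obtain ⟨-, hmem, hinj⟩ := mem_transversals.1 hf
    have hbij : f.Bijective := Finite.injective_iff_bijective.1 (by simpa using hinj)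
    exact ⟨Equiv.ofBijective f hbij, by simpa using fun a => hmem a (mem_univ a), rfl⟩

end Bregman

lemma perm_eq_card_filter {n : ℕ} (A : Matrix (Fin n) (Fin n) ℝ)
    (h01 : ∀ i j, A i j = 0 ∨ A i j = 1) :
    perm A = #{σ : Equiv.Perm (Fin n) | ∀ i, A i (σ i) = 1} := by
  rw [perm, ← sum_boole]
  refine sum_congr rfl fun σ _ => ?_
  split_ifs with h
  · exact prod_eq_one fun i _ => h i
  · obtain ⟨i, hi⟩ := not_forall.1 h
    exact prod_eq_zero (mem_univ i) ((h01 i (σ i)).resolve_right hi)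

/-- Brégman's theorem (Minc's conjecture): the permanent of a 0-1 matrix with row
sums `r_i` is at most `∏ (r_i!)^(1/r_i)` (factors with `r_i = 0` are 1, which is
automatic here since `0! = 1` and `1/0 = 0` in ℝ). -/
theorem stmt_18 {n : ℕ} (A : Matrix (Fin n) (Fin n) ℝ)
    (h01 : ∀ i j, A i j = 0 ∨ A i j = 1) :
    perm A ≤ ∏ i : Fin n,
      ((Nat.factorial (Set.ncard {j | A i j = 1}) : ℝ)) ^
        ((1 : ℝ) / (Set.ncard {j | A i j = 1} : ℝ)) := by
  classical
  set R : Fin n → Finset (Fin n) := fun i => {j | A i j = 1}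
  have hR (i : Fin n) : Set.ncard {j | A i j = 1} = #(R i) := by
    rw [Set.ncard_eq_toFinset_card', Set.toFinset_ofPred]
  have hperm : perm A = #(Bregman.transversals univ R) := by
    rw [perm_eq_card_filter A h01, Bregman.card_transversals_univ]
    simp [R]
  simpa only [hR, hperm, Bregman.bregmanFactor] using
    Bregman.card_transversals_le univ univ R rfl fun _ _ => subset_univ _
end
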